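/- Let t_n denote the number of independent dominating sets of the chain triangular cactus T_n, and let φ = (1+√5)/2. Then the sequence t_n / φⁿ converges as n → ∞ to φ³/√5; in particular t_n grows asymptotically like a constant multiple of ((1+√5)/2)ⁿ. -/

import Mathlib

/-- `S` is an independent dominating set of `G`: pairwise non-adjacent, and every
vertex outside `S` has a neighbour in `S`. -/
def IsIndepDomSet {V : Type*} (G : SimpleGraph V) (S : Finset V) : Prop :=
  (∀ v ∈ S, ∀ w ∈ S, ¬ G.Adj v w) ∧ ∀ v, v ∉ S → ∃ w ∈ S, G.Adj v w

/-- The chain triangular cactus `T n`: vertices `Sum.inl i` are `x i`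
(`0 ≤ i ≤ n`) and `Sum.inr k` is `y (k+1)` (`0 ≤ k ≤ n-1`); the `i`-th triangle
(`1 ≤ i ≤ n`) has vertices `x (i-1)`, `x i`, `y i`. -/
def triChain (n : ℕ) : SimpleGraph (Fin (n + 1) ⊕ Fin n) :=
  SimpleGraph.fromRel fun p q =>
    match p, q with
    | Sum.inl i, Sum.inl j => (i : ℕ) + 1 = (j : ℕ)
    | Sum.inl i, Sum.inr k => (i : ℕ) = (k : ℕ) ∨ (i : ℕ) = (k : ℕ) + 1
    | _, _ => False

/-- The number of independent dominating sets of the chain triangular cactus `T n`. -/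
noncomputable def numIDSTri (n : ℕ) : ℕ :=
  Nat.card {S : Finset (Fin (n + 1) ⊕ Fin n) // IsIndepDomSet (triChain n) S}

/-!
An independent dominating set of `T (n + 1)` is determined by its trace on the spine
`x 0, …, x (n + 1)`: the vertex `y k` belongs to it exactly when neither of its two spine
neighbours does, and every string of spine choices with no two adjacent vertices extends in
this way. So `t (n + 1)` counts binary strings of length `n + 2` without two consecutive
`true`s, which is the Fibonacci number `F (n + 4)`, and Binet's formula gives the limit.
-/

open Filter Topology Real
open scoped goldenRatio

theorem Nat.card_subtype_fin_cons {α : Type*} [Fintype α] {m : ℕ}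
    (P : (Fin (m + 1) → α) → Prop) :
    Nat.card {v // P v} = ∑ a, Nat.card {w : Fin m → α // P (Fin.cons a w)} := by
  rw [← Nat.card_sigma,
    ← Nat.card_congr (Equiv.subtypeProdEquivSigmaSubtype fun a w => P (Fin.cons a w))]
  exact Nat.card_congr ((Fin.consEquiv fun _ => α).symm.subtypeEquiv fun v => by simp)

def NoAdjTrue {m : ℕ} (v : Fin m → Bool) : Prop :=
  ∀ i j : Fin m, (i : ℕ) + 1 = j → ¬(v i = true ∧ v j = true)

theorem noAdjTrue_cons_false {m : ℕ} (w : Fin m → Bool) :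
    NoAdjTrue (Fin.cons false w : Fin (m + 1) → Bool) ↔ NoAdjTrue w := by
  simp [NoAdjTrue, Fin.forall_fin_succ]

theorem noAdjTrue_cons_true {m : ℕ} (w : Fin (m + 1) → Bool) :
    NoAdjTrue (Fin.cons true w : Fin (m + 2) → Bool) ↔ w 0 = false ∧ NoAdjTrue w := by
  simp [NoAdjTrue, Fin.forall_fin_succ]

theorem card_noAdjTrue : ∀ m, Nat.card {v : Fin m → Bool // NoAdjTrue v} = Nat.fib (m + 2)
  | 0 => by
    rw [Nat.card_congr (Equiv.subtypeUnivEquiv (p := NoAdjTrue) fun v i => i.elim0)]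
    simp
  | 1 => by
    rw [Nat.card_congr (Equiv.subtypeUnivEquiv (p := NoAdjTrue) fun v i j h => by omega)]
    simp [Nat.fib_add_two]
  | m + 2 => by
    have head_false : Nat.card {w : Fin (m + 1) → Bool // w 0 = false ∧ NoAdjTrue w} =
        Nat.card {u : Fin m → Bool // NoAdjTrue u} := by
      simp [Nat.card_subtype_fin_cons, noAdjTrue_cons_false]
    calc Nat.card {v : Fin (m + 2) → Bool // NoAdjTrue v}
        = Nat.card {w : Fin (m + 1) → Bool // NoAdjTrue (Fin.cons true w)} +
          Nat.card {w : Fin (m + 1) → Bool // NoAdjTrue (Fin.cons false w)} :=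
          (Nat.card_subtype_fin_cons _).trans (Fintype.sum_bool _)
      _ = Nat.fib (m + 2) + Nat.fib (m + 3) := by
        simp only [noAdjTrue_cons_true, noAdjTrue_cons_false, head_false, card_noAdjTrue]
      _ = Nat.fib (m + 4) := (Nat.fib_add_two (n := m + 2)).symm

section TriChain

variable {n : ℕ}

@[simp]
theorem triChain_adj_inl_inl (i j : Fin (n + 1)) :
    (triChain n).Adj (.inl i) (.inl j) ↔ (i : ℕ) + 1 = j ∨ (j : ℕ) + 1 = i := by
  simp only [triChain, SimpleGraph.fromRel_adj, ne_eq, Sum.inl.injEq, and_iff_right_iff_imp]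
  rintro (h | h) rfl <;> omega

@[simp]
theorem triChain_adj_inl_inr (i : Fin (n + 1)) (k : Fin n) :
    (triChain n).Adj (.inl i) (.inr k) ↔ i = k.castSucc ∨ i = k.succ := by
  simp [triChain, Fin.ext_iff]

@[simp]
theorem triChain_adj_inr_inl (k : Fin n) (i : Fin (n + 1)) :
    (triChain n).Adj (.inr k) (.inl i) ↔ i = k.castSucc ∨ i = k.succ := by
  rw [SimpleGraph.adj_comm, triChain_adj_inl_inr]

@[simp]
theorem triChain_not_adj_inr_inr (k l : Fin n) : ¬(triChain n).Adj (.inr k) (.inr l) := by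
  simp [triChain]

end TriChain

theorem Fin.exists_eq_castSucc_or_eq_succ {n : ℕ} (i : Fin (n + 2)) :
    ∃ k : Fin (n + 1), i = k.castSucc ∨ i = k.succ := by
  rcases Fin.eq_castSucc_or_eq_last i with ⟨k, rfl⟩ | rfl
  exacts [⟨k, .inl rfl⟩, ⟨Fin.last n, .inr (Fin.succ_last n).symm⟩]

theorem isIndepDomSet_triChain_iff {n : ℕ} {S : Finset (Fin (n + 2) ⊕ Fin (n + 1))} :
    IsIndepDomSet (triChain (n + 1)) S ↔
      NoAdjTrue (fun i => decide (.inl i ∈ S)) ∧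
        ∀ k : Fin (n + 1), .inr k ∈ S ↔ .inl k.castSucc ∉ S ∧ .inl k.succ ∉ S := by
  constructor
  · rintro ⟨indep, dom⟩
    refine ⟨fun i j hij ⟨hi, hj⟩ => indep _ (by simpa using hi) _ (by simpa using hj)
      (by simp [hij]), fun k => ⟨fun hk => ?_, fun ⟨h₁, h₂⟩ => ?_⟩⟩
    · exact ⟨fun h => indep _ h _ hk (by simp), fun h => indep _ h _ hk (by simp)⟩
    · by_contra hk
      obtain ⟨i | l, hw, hadj⟩ := dom _ hk
      · obtain rfl | rfl := (triChain_adj_inr_inl k i).1 hadj <;> contradiction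
      · exact triChain_not_adj_inr_inr k l hadj
  · rintro ⟨hx, hy⟩
    refine ⟨?_, ?_⟩
    · rintro (i | k) hp (j | l) hq hadj
      · rcases (triChain_adj_inl_inl i j).1 hadj with h | h
        · exact hx i j h ⟨by simpa using hp, by simpa using hq⟩
        · exact hx j i h ⟨by simpa using hq, by simpa using hp⟩
      · obtain rfl | rfl := (triChain_adj_inl_inr i l).1 hadj
        exacts [((hy l).1 hq).1 hp, ((hy l).1 hq).2 hp]
      · obtain rfl | rfl := (triChain_adj_inr_inl k j).1 hadj
        exacts [((hy k).1 hp).1 hq, ((hy k).1 hp).2 hq]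
      · exact triChain_not_adj_inr_inr k l hadj
    · rintro (i | k) hp
      · -- `x i` lies in a triangle `k`, whose other two vertices are not both outside `S`
        obtain ⟨k, hk⟩ := Fin.exists_eq_castSucc_or_eq_succ i
        by_cases hyk : .inr k ∈ S
        · exact ⟨_, hyk, by simpa using hk⟩
        · have spine_mem := (hy k).not.1 hyk
          rcases hk with rfl | rfl
          · exact ⟨.inl k.succ, by tauto, by simp⟩
          · exact ⟨.inl k.castSucc, by tauto, by simp⟩
      · by_cases h : .inl k.castSucc ∈ S
        · exact ⟨_, h, by simp⟩
        · refine ⟨.inl k.succ, ?_, by simp⟩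
          by_contra h'
          exact hp ((hy k).2 ⟨h, h'⟩)

def indepDomSetTriChainEquiv (n : ℕ) :
    {S : Finset (Fin (n + 2) ⊕ Fin (n + 1)) // IsIndepDomSet (triChain (n + 1)) S} ≃
      {v : Fin (n + 2) → Bool // NoAdjTrue v} where
  toFun S := ⟨fun i => decide (Sum.inl i ∈ S.1), (isIndepDomSet_triChain_iff.1 S.2).1⟩
  invFun v := ⟨(Finset.univ.filter (v.1 · = true)).disjSum
      (Finset.univ.filter fun k => v.1 k.castSucc = false ∧ v.1 k.succ = false),
    isIndepDomSet_triChain_iff.2 ⟨by simpa using v.2, by simp⟩⟩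
  left_inv S := Subtype.ext <| Finset.ext fun
    | .inl i => by simp
    | .inr k => by simp [(isIndepDomSet_triChain_iff.1 S.2).2 k]
  right_inv v := Subtype.ext <| funext fun i => by simp

theorem numIDSTri_succ (n : ℕ) : numIDSTri (n + 1) = Nat.fib (n + 4) :=
  (Nat.card_congr (indepDomSetTriChainEquiv n)).trans (card_noAdjTrue (n + 2))

theorem tendsto_fib_add_div_goldenRatio_pow (k : ℕ) :
    Tendsto (fun n => (Nat.fib (n + k) : ℝ) / φ ^ n) atTop (𝓝 (φ ^ k / √5)) := by
  have ratio_pow : Tendsto (fun n => (ψ / φ) ^ n) atTop (𝓝 0) := by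
    refine tendsto_pow_atTop_nhds_zero_of_abs_lt_one ?_
    rw [abs_div, abs_of_pos goldenRatio_pos, div_lt_one goldenRatio_pos,
      abs_of_neg goldenConj_neg]
    linarith [neg_one_lt_goldenConj, one_lt_goldenRatio]
  have binet (n : ℕ) :
      (Nat.fib (n + k) : ℝ) / φ ^ n = φ ^ k / √5 - ψ ^ k / √5 * (ψ / φ) ^ n := by
    rw [coe_fib_eq, div_pow ψ φ, pow_add, pow_add]
    field
  simpa [funext binet] using tendsto_const_nhds.sub (ratio_pow.const_mul (ψ ^ k / √5))

theorem numIDSTri_asymptotics :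
    Filter.Tendsto
      (fun n : ℕ => (numIDSTri n : ℝ) / ((1 + Real.sqrt 5) / 2) ^ n)
      Filter.atTop
      (nhds (((1 + Real.sqrt 5) / 2) ^ 3 / Real.sqrt 5)) := by
  refine (tendsto_fib_add_div_goldenRatio_pow 3).congr' ?_
  filter_upwards [eventually_ge_atTop 1] with n hn
  obtain ⟨m, rfl⟩ := Nat.exists_eq_add_of_le' hn
  rw [numIDSTri_succ]
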